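/- For the 21-uniform morphism g5 with g5(0)=001101110001010110010, g5(1)=001101110001001110101, g5(2)=001101110001001101010, and for every squarefree ternary word w of length 4, the image g5(w) is 20-directed. -/

import Mathlib

/-!
The claim is a finite computation. A factor of length `k` of `u` is the window of length `k` at
some position, so `u` is `k`-directed as soon as no window of length `k` is the reverse of
another; for the 18 squarefree words `w` of length 4 this is checked on the 84 letters of
`g5 w` by comparing all pairs of windows. The other 63 words of length 4 are ruled out by
exhibiting a square in them.
-/

/-- The 21-uniform morphism `g5`. -/
def g5 : Fin 3 → List (Fin 2)
  | 0 => [0, 0, 1, 1, 0, 1, 1, 1, 0, 0, 0, 1, 0, 1, 0, 1, 1, 0, 0, 1, 0]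
  | 1 => [0, 0, 1, 1, 0, 1, 1, 1, 0, 0, 0, 1, 0, 0, 1, 1, 1, 0, 1, 0, 1]
  | 2 => [0, 0, 1, 1, 0, 1, 1, 1, 0, 0, 0, 1, 0, 0, 1, 1, 0, 1, 0, 1, 0]

/-- A ternary word is squarefree if it contains no nonempty factor `u ++ u`. -/
def Squarefree' {α : Type*} (w : List α) : Prop :=
  ∀ u : List α, u ≠ [] → ¬ (u ++ u) <:+: w

section

variable {α : Type*}

def IsDirectedWord (k : ℕ) (u : List α) : Prop :=
  ∀ f : List α, f.length = k → f <:+: u → ¬ f.reverse <:+: u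

theorem List.IsInfix.exists_eq_take_drop {f u : List α} (h : f <:+: u) :
    ∃ i, i + f.length ≤ u.length ∧ f = (u.drop i).take f.length := by
  obtain ⟨s, t, rfl⟩ := h
  refine ⟨s.length, by simp, ?_⟩
  rw [List.append_assoc, List.drop_left, List.take_left]

theorem isDirectedWord_of_forall_window_ne_reverse {k : ℕ} {u : List α}
    (h : ∀ i ∈ List.range (u.length + 1 - k), ∀ j ∈ List.range (i + 1),
      (u.drop i).take k ≠ ((u.drop j).take k).reverse) :
    IsDirectedWord k u := by
  intro f hf hfu hfu'
  obtain ⟨i, hi, hfi⟩ := hfu.exists_eq_take_drop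
  obtain ⟨j, hj, hfj⟩ := hfu'.exists_eq_take_drop
  rw [List.length_reverse, hf] at hfj hj
  rw [hf] at hfi hi
  rcases le_or_gt j i with hji | hij
  · refine h i (by simp; omega) j (by simp; omega) ?_
    rw [← hfi, ← hfj, List.reverse_reverse]
  · exact h j (by simp; omega) i (by simp; omega) (hfj.symm.trans (congrArg _ hfi))

theorem Squarefree'.not_infix_window_append_self {w : List α} (hw : Squarefree' w) :
    ∀ i ∈ List.range w.length, ∀ k ∈ List.range w.length,
      ¬ ((w.drop i).take (k + 1) ++ (w.drop i).take (k + 1)) <:+: w := by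
  intro i hi k _
  refine hw _ fun hnil => ?_
  have := congrArg List.length hnil
  simp only [List.mem_range, List.length_take, List.length_drop, List.length_nil] at hi this
  omega

end

set_option maxRecDepth 100000 in
/-- For every squarefree ternary word `w` of length 4, the image `g5(w)` is
20-directed: every factor `f` of length 20 of `g5(w)` has `f.reverse` not a
factor of `g5(w)`. -/
theorem stmt_9 (w : List (Fin 3)) (hw : Squarefree' w) (hlen : w.length = 4) :
    ∀ f : List (Fin 2), f.length = 20 → f <:+: (w.map g5).flatten →
      ¬ f.reverse <:+: (w.map g5).flatten := by
  obtain ⟨a, b, c, d, rfl⟩ := List.length_eq_four.mp hlen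
  change IsDirectedWord 20 _
  fin_cases a <;> fin_cases b <;> fin_cases c <;> fin_cases d <;>
    first
      | exact absurd hw.not_infix_window_append_self (by decide)
      | exact isDirectedWord_of_forall_window_ne_reverse (by decide)
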